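/- arXiv:2011.12742 — 4 statements merged into one kernel-verified Lean document; each statement's English description precedes it below -/
import Mathlib

section
/- Let x be a Lyndon word and let u, v be proper non-empty prefixes of x with u^∞ < v^∞. Then for any e ≥ 1, (x^e u)^∞ < (x^e v)^∞. -/
/-!
For a proper non-empty prefix `u` of a Lyndon word `x`, `u^∞` leaves `x^∞` at a position
`m_u` with `|u| ≤ m_u < |x|`, and is smaller there: otherwise, or if there were no such position,
the suffix of `x` starting at a multiple of `|u|` would not exceed `x`. Hence `(u x^e)^∞` follows
`u^∞` for `|u| + m_u` letters. The first difference `n` of `u^∞ < v^∞` lies below both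
`|u| + m_u` and `|v| + m_v`: if `m_u ≠ m_v` then `m_u < m_v` and `n = m_u`, and if `m_u = m_v = m`
but `n ≥ min |u| |v| + m`, the two periodic words would agree on a window long enough to force
`u^∞ = v^∞`. So `(u x^e)^∞ < (v x^e)^∞` at `n`, and rotating by `x^e` gives the claim.
-/

variable {α : Type*} [LinearOrder α] [Inhabited α]

/-- A Lyndon word: a non-empty word strictly lexicographically smaller than
all its proper non-empty suffixes. -/
def IsLyndon (w : List α) : Prop :=
  w ≠ [] ∧ ∀ v : List α, v ≠ [] → v ≠ w → v <:+ w → List.Lex (· < ·) w v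

/-- `wpow x k` is the word `x` repeated `k` times. -/
def wpow (x : List α) (k : ℕ) : List α := (List.replicate k x).flatten

/-- `infWord x` is the infinite word `x^∞` (junk value if `x = []`). -/
def infWord (x : List α) : ℕ → α := fun i => x.getD (i % x.length) default

/-- Strict lexicographic order on infinite words. -/
def InfLt (f g : ℕ → α) : Prop := ∃ n, (∀ i < n, f i = g i) ∧ f n < g n

/-- The infinite ordering `≺` on non-empty words. -/
def Prec (u v : List α) : Prop :=
  InfLt (infWord u) (infWord v) ∨ (infWord u = infWord v ∧ v.length < u.length)

/-- `u` is strongly less than `v`: they share a common prefix followed by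
strictly comparable letters. -/
def StrongLt (u v : List α) : Prop :=
  ∃ (p s t : List α) (a b : α), a < b ∧ u = p ++ a :: s ∧ v = p ++ b :: t

open Function

theorem Function.Periodic.eq_of_forall_lt_min_add {β : Type*} {f g : ℕ → β} {p q m : ℕ}
    (hf : Periodic f p) (hg : Periodic g q) (hp : 0 < p) (hq : 0 < q) (hpm : p ≤ m)
    (hqm : q ≤ m) (h : ∀ i < min p q + m, f i = g i) : f = g := by
  wlog hpq : p ≤ q generalizing f g p q
  · exact (this hg hf hq hp hqm hpm (fun i hi => (h i (by omega)).symm) (by omega)).symm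
  -- `f` and `g` agree on `[0, p + q)`, so `f (j + q) = g (j + q) = g j = f j` for `j < p`.
  have hfq : Periodic f q := fun j => by
    have := Nat.mod_lt j hp
    rw [← hf.map_mod_nat, ← Nat.mod_add_mod, hf.map_mod_nat, h _ (by omega), hg,
      ← h _ (by omega), hf.map_mod_nat]
  funext i
  rw [← hfq.map_mod_nat i, ← hg.map_mod_nat i, h _ (by have := Nat.mod_lt i hq; omega)]

section FirstDifference

omit [Inhabited α]

def InfLtAt (f g : ℕ → α) (n : ℕ) : Prop := (∀ i < n, f i = g i) ∧ f n < g n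

namespace InfLtAt

variable {f g h f' g' : ℕ → α} {a b n : ℕ}

theorem le_of_forall_lt_eq (hfg : InfLtAt f g n) (heq : ∀ i < a, f i = g i) : a ≤ n := by
  by_contra! han
  exact hfg.2.ne (heq n han)

theorem unique (ha : InfLtAt f g a) (hb : InfLtAt f g b) : a = b :=
  le_antisymm (hb.le_of_forall_lt_eq ha.1) (ha.le_of_forall_lt_eq hb.1)

theorem not_infLtAt (ha : InfLtAt f g a) (hb : InfLtAt g f b) : False := by
  have hab : a = b := le_antisymm (hb.le_of_forall_lt_eq fun i hi => (ha.1 i hi).symm)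
    (ha.le_of_forall_lt_eq fun i hi => (hb.1 i hi).symm)
  subst hab
  exact lt_asymm ha.2 hb.2

theorem of_lt (hf : InfLtAt f h a) (hg : InfLtAt g h b) (hab : a < b) : InfLtAt f g a :=
  ⟨fun i hi => (hf.1 i hi).trans (hg.1 i (hi.trans hab)).symm, (hg.1 a hab) ▸ hf.2⟩

theorem congr (hfg : InfLtAt f g n) (hf : ∀ i ≤ n, f' i = f i) (hg : ∀ i ≤ n, g' i = g i) :
    InfLtAt f' g' n :=
  ⟨fun i hi => by rw [hf i hi.le, hg i hi.le, hfg.1 i hi],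
    by rw [hf n le_rfl, hg n le_rfl]; exact hfg.2⟩

end InfLtAt

theorem infLtAt_trichotomy (f g : ℕ → α) (N : ℕ) :
    (∀ i < N, f i = g i) ∨ ∃ n < N, InfLtAt f g n ∨ InfLtAt g f n := by
  classical
  by_cases hall : ∀ i < N, f i = g i
  · exact Or.inl hall
  push Not at hall
  refine Or.inr ⟨Nat.find hall, (Nat.find_spec hall).1, ?_⟩
  have hagree : ∀ i < Nat.find hall, f i = g i := fun i hi => by
    by_contra hne
    exact Nat.find_min hall hi ⟨hi.trans (Nat.find_spec hall).1, hne⟩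
  rcases (Nat.find_spec hall).2.lt_or_gt with hlt | hgt
  · exact Or.inl ⟨hagree, hlt⟩
  · exact Or.inr ⟨fun i hi => (hagree i hi).symm, hgt⟩

theorem infLt_of_shift {f g : ℕ → α} (k : ℕ) (hk : ∀ i < k, f i = g i)
    (h : InfLt (fun i => f (i + k)) (fun i => g (i + k))) : InfLt f g := by
  obtain ⟨n, hn, hlt⟩ := h
  refine ⟨n + k, fun i hi => ?_, hlt⟩
  rcases lt_or_ge i k with hik | hki
  · exact hk i hik
  · simpa [Nat.sub_add_cancel hki] using hn (i - k) (by omega)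

end FirstDifference

section InfiniteWords

omit [LinearOrder α]

theorem infWord_periodic (u : List α) : Periodic (infWord u) u.length := fun i => by
  simp only [infWord, Nat.add_mod_right]

theorem infWord_of_lt {u : List α} {i : ℕ} (hi : i < u.length) : infWord u i = u[i] := by
  rw [infWord, Nat.mod_eq_of_lt hi, List.getD_eq_getElem]

theorem infWord_eq_of_prefix {u x : List α} (h : u <+: x) {i : ℕ} (hi : i < u.length) :
    infWord u i = infWord x i := by
  rw [infWord_of_lt hi, infWord_of_lt (hi.trans_le h.length_le), h.getElem hi]

theorem infWord_rotate (u : List α) (n i : ℕ) : infWord (u.rotate n) i = infWord u (i + n) := by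
  rcases eq_or_ne u [] with rfl | hu
  · simp [infWord]
  have hi := Nat.mod_lt i (List.length_pos_iff.mpr hu)
  simp only [infWord, List.length_rotate, List.getD_eq_getElem?_getD, List.getElem?_rotate hi,
    Nat.mod_add_mod]

theorem infWord_append_add_length (w u : List α) (i : ℕ) :
    infWord (w ++ u) (i + w.length) = infWord (u ++ w) i := by
  rw [← infWord_rotate, List.rotate_append_length_eq]

theorem infWord_append_of_lt {u w : List α} {m : ℕ} (hm : m ≤ w.length)
    (h : ∀ i < m, infWord u i = infWord w i) {j : ℕ} (hj : j < u.length + m) :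
    infWord (u ++ w) j = infWord u j := by
  rw [infWord_of_lt (by simp; omega)]
  rcases lt_or_ge j u.length with hju | huj
  · rw [List.getElem_append_left hju, infWord_of_lt hju]
  · rw [List.getElem_append_right huj, ← infWord_of_lt (by omega), ← h _ (by omega),
      ← infWord_periodic u, Nat.sub_add_cancel huj]

end InfiniteWords

theorem infLt_infWord_append_left (w : List α) {u v : List α}
    (h : InfLt (infWord (u ++ w)) (infWord (v ++ w))) :
    InfLt (infWord (w ++ u)) (infWord (w ++ v)) := by
  refine infLt_of_shift w.length (fun i hi => ?_) ?_
  · rw [infWord_of_lt (by simp; omega), infWord_of_lt (by simp; omega),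
      List.getElem_append_left hi, List.getElem_append_left hi]
  · simpa only [infWord_append_add_length] using h

omit [LinearOrder α] [Inhabited α] in
theorem prefix_wpow (x : List α) {e : ℕ} (he : 1 ≤ e) : x <+: wpow x e := by
  obtain ⟨k, rfl⟩ := Nat.exists_eq_add_of_le' he
  simp [wpow, List.replicate_succ]

theorem InfLtAt.lt_length_add {u v : List α} {h : ℕ → α} {mu mv n : ℕ} (hu : u ≠ [])
    (hv : v ≠ []) (hU : InfLtAt (infWord u) h mu) (hV : InfLtAt (infWord v) h mv)
    (hmu : u.length ≤ mu) (hmv : v.length ≤ mv) (huv : InfLtAt (infWord u) (infWord v) n) :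
    n < u.length + mu ∧ n < v.length + mv := by
  have hp := List.length_pos_iff.mpr hu
  have hq := List.length_pos_iff.mpr hv
  rcases lt_trichotomy mu mv with hlt | rfl | hgt
  · have := huv.unique (hU.of_lt hV hlt)
    omega
  · by_contra hn
    have heq := (infWord_periodic u).eq_of_forall_lt_min_add (infWord_periodic v) hp hq hmu hmv
      fun i hi => huv.1 i (by omega)
    exact huv.2.ne (congrFun heq n)
  · exact (huv.not_infLtAt (hV.of_lt hU hgt)).elim

namespace IsLyndon

variable {x : List α}

theorem exists_infLtAt_shift (hx : IsLyndon x) {b : ℕ} (hb : 0 < b) (hbx : b < x.length) :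
    ∃ r, r + b < x.length ∧ InfLtAt (infWord x) (fun i => infWord x (i + b)) r := by
  have hne : x.drop b ≠ x := fun h => by
    have := congrArg List.length h
    simp only [List.length_drop] at this
    omega
  rcases List.lt_iff_exists.mp (hx.2 _ (by simp; omega) hne (List.drop_suffix _ _)) with
    ⟨-, hlen⟩ | ⟨r, hr, hrb, hagree, hrlt⟩
  · simp only [List.length_drop] at hlen
    omega
  simp only [List.length_drop, List.getElem_drop] at hrb hagree hrlt
  refine ⟨r, by omega, fun i hi => ?_, ?_⟩
  · dsimp only
    rw [infWord_of_lt (by omega), infWord_of_lt (by omega), hagree i hi]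
    simp only [Nat.add_comm]
  · dsimp only
    rw [infWord_of_lt (by omega), infWord_of_lt (by omega)]
    simpa only [Nat.add_comm] using hrlt

theorem exists_infLtAt_of_prefix (hx : IsLyndon x) {u : List α} (hu : u ≠ []) (hux : u ≠ x)
    (hpre : u <+: x) :
    ∃ m, u.length ≤ m ∧ m < x.length ∧ InfLtAt (infWord u) (infWord x) m := by
  have hp : 0 < u.length := List.length_pos_iff.mpr hu
  have hpx : u.length < x.length :=
    lt_of_le_of_ne hpre.length_le fun h => hux (hpre.eq_of_length h)
  have hpre' : ∀ i < u.length, infWord u i = infWord x i := fun _ => infWord_eq_of_prefix hpre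
  rcases infLtAt_trichotomy (infWord u) (infWord x) x.length with hall | ⟨n, hn, hlt | hgt⟩
  · obtain ⟨r, hr, -, hlt⟩ := hx.exists_infLtAt_shift hp hpx
    have hper : infWord x (r + u.length) = infWord x r := by
      rw [← hall _ (by omega), ← hall _ (by omega), infWord_periodic]
    exact (lt_irrefl _ (hlt.trans_eq hper)).elim
  · exact ⟨n, hlt.le_of_forall_lt_eq hpre', hn, hlt⟩
  · have hpn : u.length ≤ n := hgt.le_of_forall_lt_eq fun i hi => (hpre' i hi).symm
    have hn' := Nat.mod_add_div' n u.length
    have hr := Nat.mod_lt n hp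
    -- The suffix of `x` at the last multiple of `|u|` up to `n` falls below `x` at `n % |u|`.
    have hb : u.length ≤ n / u.length * u.length :=
      Nat.le_mul_of_pos_left _ (Nat.div_pos hpn hp)
    obtain ⟨r, -, hshift⟩ := hx.exists_infLtAt_shift (b := n / u.length * u.length) (by omega)
      (by omega)
    refine (hshift.not_infLtAt (b := n % u.length) ⟨fun i hi => ?_, ?_⟩).elim
    · dsimp only
      rw [hgt.1 _ (by omega), ← hpre' i (by omega)]
      simpa using (infWord_periodic u).nat_mul (n / u.length) i
    · dsimp only
      rw [hn', ← hpre' _ hr]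
      simpa [(infWord_periodic u).map_mod_nat n] using hgt.2

end IsLyndon

/-- Claim 1, second case: for proper non-empty prefixes `u, v` of a Lyndon
word `x` with `u^∞ < v^∞`, one has `(x^e u)^∞ < (x^e v)^∞` for all `e ≥ 1`. -/
theorem claim1_strict {α : Type*} [LinearOrder α] [Inhabited α]
    (x u v : List α) (hx : IsLyndon x)
    (hu : u ≠ []) (hu' : u ≠ x) (hupx : u <+: x)
    (hv : v ≠ []) (hv' : v ≠ x) (hvpx : v <+: x)
    (hlt : InfLt (infWord u) (infWord v)) :
    ∀ e : ℕ, 1 ≤ e →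
      InfLt (infWord (wpow x e ++ u)) (infWord (wpow x e ++ v)) := by
  intro e he
  obtain ⟨mu, hmu, hmux, hU⟩ := hx.exists_infLtAt_of_prefix hu hu' hupx
  obtain ⟨mv, hmv, hmvx, hV⟩ := hx.exists_infLtAt_of_prefix hv hv' hvpx
  obtain ⟨n, hn⟩ : ∃ n, InfLtAt (infWord u) (infWord v) n := hlt
  obtain ⟨hnu, hnv⟩ := InfLtAt.lt_length_add hu hv hU hV hmu hmv hn
  have hxe := prefix_wpow x he
  have hext {w : List α} {m : ℕ} (hw : InfLtAt (infWord w) (infWord x) m) (hm : m < x.length) :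
      ∀ j < w.length + m, infWord (w ++ wpow x e) j = infWord w j := fun _ hj =>
    infWord_append_of_lt (hm.le.trans hxe.length_le)
      (fun i hi => (hw.1 i hi).trans (infWord_eq_of_prefix hxe (hi.trans hm))) hj
  exact infLt_infWord_append_left _
    ⟨n, hn.congr (fun i hi => hext hU hmux i (by omega)) fun i hi => hext hV hmvx i (by omega)⟩
end

section
/- Let x be a Lyndon word and u a proper non-empty prefix of x with k ≥ 1. Then (x^k u)^∞ < x^∞, i.e., x^k u ≺ x^k in the infinite ordering. -/
variable {α : Type*} [LinearOrder α] [Inhabited α]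

/-!
Write `u = x.take m` with `0 < m < |x|` and `w = x^k u`. Since `w` is a prefix of `x^∞`, the
words `w^∞` and `x^∞` agree on the first `|w|` letters. After that, `w^∞` restarts with `x`,
while `x^∞` continues with the proper suffix `x.drop m` (as `|w| ≡ m` mod `|x|`). The Lyndon
property gives `x < x.drop m`, and as `x.drop m` is shorter this is witnessed by a first
mismatch inside `x.drop m`, which is then the first difference of `w^∞` and `x^∞`. Finally
`(x^k)^∞ = x^∞`, so the same comparison gives `x^k u ≺ x^k`.
-/

section Periodic

variable {β : Type*}

lemma wpow_succ' (x : List β) (k : ℕ) : wpow x (k + 1) = wpow x k ++ x := by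
  simp [wpow, List.replicate_succ']

lemma length_wpow (x : List β) (k : ℕ) : (wpow x k).length = k * x.length := by
  simp [wpow]

lemma getElem?_wpow {x : List β} {k i : ℕ} (hi : i < k * x.length) :
    (wpow x k)[i]? = x[i % x.length]? := by
  induction k with
  | zero => omega
  | succ k ih =>
    rw [wpow_succ']
    rcases lt_or_ge i (k * x.length) with h | h
    · rw [List.getElem?_append_left (by rwa [length_wpow]), ih h]
    · obtain ⟨r, rfl⟩ := Nat.exists_eq_add_of_le h
      rw [Nat.add_one_mul] at hi
      rw [List.getElem?_append_right (by rwa [length_wpow]), length_wpow,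
        Nat.add_sub_cancel_left, Nat.mul_add_mod_of_lt (by omega)]

lemma wpow_append_take (x : List β) (k m : ℕ) :
    wpow x k ++ x.take m = (wpow x (k + 1)).take (k * x.length + m) := by
  rw [wpow_succ', ← length_wpow x k, List.take_length_add_append]

variable [Inhabited β]

lemma infWord_apply (x : List β) (i : ℕ) : infWord x i = x[i % x.length]?.getD default := by
  simp [infWord, List.getD_eq_getElem?_getD]

lemma infWord_of_lt_s10 {x : List β} {i : ℕ} (hi : i < x.length) : infWord x i = x[i] := by
  simp [infWord_apply, Nat.mod_eq_of_lt hi, hi]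

lemma infWord_add_left (x : List β) (n i : ℕ) :
    infWord x (n + i) = infWord x (n % x.length + i) := by
  simp only [infWord_apply, Nat.add_mod, Nat.mod_mod]

lemma infWord_wpow (x : List β) {k : ℕ} (hk : k ≠ 0) : infWord (wpow x k) = infWord x := by
  funext i
  obtain rfl | hx := eq_or_ne x []
  · simp [wpow]
  have hpos : 0 < k * x.length := Nat.mul_pos (Nat.pos_of_ne_zero hk) (List.length_pos_iff.2 hx)
  rw [infWord_apply, infWord_apply, length_wpow, getElem?_wpow (Nat.mod_lt _ hpos),
    Nat.mod_mod_of_dvd _ (Dvd.intro_left _ rfl)]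

lemma infWord_wpow_append_take {x : List β} {k m i : ℕ} (hm : m ≤ x.length)
    (hi : i < k * x.length + m) : infWord (wpow x k ++ x.take m) i = infWord x i := by
  have hlen : (wpow x k ++ x.take m).length = k * x.length + m := by
    simp [length_wpow, hm]
  have hi' : i < (k + 1) * x.length := by rw [Nat.add_one_mul]; omega
  rw [infWord_apply, hlen, Nat.mod_eq_of_lt hi, infWord_apply, wpow_append_take x k m,
    List.getElem?_take_of_lt hi, getElem?_wpow hi']

end Periodic

lemma IsLyndon.exists_infWord_lt_shift {x : List α} (hx : IsLyndon x) {m : ℕ} (h0 : 0 < m)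
    (hm : m < x.length) :
    ∃ i, m + i < x.length ∧ (∀ j < i, infWord x j = infWord x (m + j)) ∧
      infWord x i < infWord x (m + i) := by
  have hlt : x < x.drop m := hx.2 _ (by simp; omega)
    (fun h => by have := congrArg List.length h; simp at this; omega) (List.drop_suffix m x)
  rcases List.lt_iff_exists.1 hlt with ⟨-, hlen⟩ | ⟨i, hix, hid, hagree, hi⟩
  · simp at hlen; omega
  · have hshift : ∀ j (hj : j < (x.drop m).length), infWord x (m + j) = (x.drop m)[j] := by
      intro j hj
      rw [infWord_of_lt_s10 (by simp at hj; omega), List.getElem_drop]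
    refine ⟨i, by simp at hid; omega, fun j hj => ?_, ?_⟩
    · rw [infWord_of_lt_s10 (by omega), hshift j (by omega)]
      exact hagree j hj
    · rwa [infWord_of_lt_s10 hix, hshift i hid]

lemma IsLyndon.infLt_infWord_of_agree {x w : List α} (hx : IsLyndon x)
    (hw : ∀ i < w.length, infWord w i = infWord x i) (hxw : x.length ≤ w.length)
    (hmod : w.length % x.length ≠ 0) :
    InfLt (infWord w) (infWord x) := by
  have hx0 : 0 < x.length := List.length_pos_iff.2 hx.1
  obtain ⟨i, hi, hagree, hlt⟩ :=
    hx.exists_infWord_lt_shift (Nat.pos_of_ne_zero hmod) (Nat.mod_lt _ hx0)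
  have hshift : ∀ j ≤ i, infWord w (w.length + j) = infWord x j ∧
      infWord x (w.length + j) = infWord x (w.length % x.length + j) := fun j hj =>
    ⟨by rw [infWord_add_left, Nat.mod_self, Nat.zero_add, hw j (by omega)],
      infWord_add_left x _ j⟩
  refine ⟨w.length + i, fun j hj => ?_, ?_⟩
  · rcases lt_or_ge j w.length with h | h
    · exact hw j h
    · obtain ⟨j, rfl⟩ := Nat.exists_eq_add_of_le h
      rw [(hshift j (by omega)).1, (hshift j (by omega)).2]
      exact hagree j (by omega)
  · rwa [(hshift i le_rfl).1, (hshift i le_rfl).2]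

/-- Claim 3: for a Lyndon word `x` and a proper non-empty prefix `u` of `x`,
`(x^k u)^∞ < x^∞`, i.e. `x^k u ≺ x^k`, for every `k ≥ 1`. -/
theorem claim3_power_prefix_prec {α : Type*} [LinearOrder α] [Inhabited α]
    (x u : List α) (k : ℕ) (hx : IsLyndon x)
    (hu : u ≠ []) (hu' : u ≠ x) (hupx : u <+: x) (hk : 1 ≤ k) :
    InfLt (infWord (wpow x k ++ u)) (infWord x) ∧
    Prec (wpow x k ++ u) (wpow x k) := by
  have hu0 : 0 < u.length := List.length_pos_iff.2 hu
  have hux : u.length < x.length := lt_of_le_of_ne hupx.length_le (mt hupx.eq_of_length hu')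
  have hlen : (wpow x k ++ u).length = k * x.length + u.length := by simp [length_wpow]
  have key : InfLt (infWord (wpow x k ++ u)) (infWord x) := by
    refine hx.infLt_infWord_of_agree (fun i hi => ?_) ?_ ?_
    · rw [List.prefix_iff_eq_take.1 hupx]
      exact infWord_wpow_append_take hux.le (hlen ▸ hi)
    · rw [hlen]
      have := Nat.le_mul_of_pos_left x.length hk
      omega
    · rw [hlen, Nat.mul_add_mod_of_lt hux]
      exact hu0.ne'
  exact ⟨key, Or.inl (by rwa [infWord_wpow x (by omega)])⟩
end

section
/- Every non-empty word y admits a unique factorisation y = x_1 x_2 ... x_k where each x_i is a Lyndon word and x_1 ≥ x_2 ≥ ... ≥ x_k in the lexicographic order. -/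
/-!
Existence: factor the word into letters, which are Lyndon, and build the factorisation from the
right; a new Lyndon word `u` is pushed onto the front and absorbed into its successor `v` as long
as `u < v`, since then `u ++ v` is again Lyndon.

Uniqueness: the first factor of a Lyndon factorisation is the longest Lyndon prefix of the word.
A longer Lyndon prefix `b` would end inside (or at the end of) some later factor `x`, so it has a
proper suffix `u` that is a prefix of `x`; then `b < u ≤ x ≤ a ≤ b`, where `a` is the first
factor, a proper prefix of `b`.
-/

variable {α : Type*} [LinearOrder α] [Inhabited α]

namespace List

variable {α : Type*}

theorem append_lt_append_of_lt_of_not_prefix [LT α] {u w : List α} (h : u < w)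
    (hp : ¬ u <+: w) (x y : List α) : u ++ x < w ++ y := by
  induction h with
  | nil => exact absurd nil_prefix hp
  | rel hab => exact Lex.rel hab
  | cons _ ih => exact Lex.cons (ih fun hp' => hp ((prefix_cons_inj _).2 hp'))

theorem exists_eq_append_cons_of_prefix_flatten {L : List (List α)} {p : List α}
    (hp : p <+: L.flatten) (hne : p ≠ []) :
    ∃ L₁ x L₂ u, L = L₁ ++ x :: L₂ ∧ u <+: x ∧ u ≠ [] ∧ p = L₁.flatten ++ u := by
  induction L generalizing p with
  | nil => exact absurd (prefix_nil.1 hp) hne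
  | cons x L ih =>
    by_cases hpx : p <+: x
    · exact ⟨[], x, L, p, rfl, hpx, hne, by simp⟩
    rw [flatten_cons] at hp
    obtain ⟨q, rfl⟩ := (prefix_or_prefix_of_prefix hp (prefix_append x _)).resolve_left hpx
    have hq : q ≠ [] := by rintro rfl; simp at hpx
    obtain ⟨L₁, z, L₂, u, rfl, hu, hune, rfl⟩ := ih ((prefix_append_right_inj x).1 hp) hq
    exact ⟨x :: L₁, z, L₂, u, rfl, hu, hune, by simp⟩

end List

open List

section

variable {α : Type*} [LinearOrder α]

theorem isLyndon_singleton (c : α) : IsLyndon [c] := by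
  refine ⟨by simp, fun v hv hne hsuf => ?_⟩
  rcases suffix_cons_iff.1 hsuf with h | h
  · exact absurd h hne
  · exact absurd (suffix_nil.1 h) hv

theorem IsLyndon.append {u v : List α} (hu : IsLyndon u) (hv : IsLyndon v) (huv : u < v) :
    IsLyndon (u ++ v) := by
  have huv_v : u ++ v < v := by
    by_cases hp : u <+: v
    · obtain ⟨t, rfl⟩ := hp
      have ht : t ≠ [] := by rintro rfl; simp at huv
      exact append_left_lt (hv.2 t ht (mt self_eq_append_left.1 hu.1) (suffix_append u t))
    · simpa using append_lt_append_of_lt_of_not_prefix huv hp v []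
  refine ⟨by simp [hu.1], fun s hs hsne ⟨t, ht⟩ => ?_⟩
  rcases append_eq_append_iff.1 ht with ⟨u', rfl, rfl⟩ | ⟨v', rfl, hvs⟩
  · rcases eq_or_ne u' [] with rfl | hu'
    · simpa using huv_v
    have ht : t ≠ [] := by rintro rfl; simp at hsne
    have hlt : t ++ u' < u' := hu.2 u' hu' (mt self_eq_append_left.1 ht) (suffix_append t u')
    exact append_lt_append_of_lt_of_not_prefix hlt (fun hp => ht (by simpa using hp.length_le)) v v
  · rcases eq_or_ne s v with rfl | hsv
    · exact huv_v
    · exact lt_trans huv_v (hv.2 s hs hsv ⟨v', hvs.symm⟩)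

def IsLyndonFactorisation (L : List (List α)) : Prop :=
  (∀ x ∈ L, IsLyndon x) ∧ L.IsChain (· ≥ ·)

namespace IsLyndonFactorisation

theorem nil : IsLyndonFactorisation ([] : List (List α)) := ⟨by simp, isChain_nil⟩

theorem of_cons {a : List α} {L : List (List α)} (h : IsLyndonFactorisation (a :: L)) :
    IsLyndonFactorisation L :=
  ⟨fun x hx => h.1 x (mem_cons_of_mem a hx), h.2.tail⟩

theorem le_head_of_mem {a x : List α} {L : List (List α)} (h : IsLyndonFactorisation (a :: L))
    (hx : x ∈ L) : x ≤ a :=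
  (pairwise_cons.1 (isChain_iff_pairwise.1 h.2)).1 x hx

theorem eq_nil_of_flatten_eq_nil {L : List (List α)} (h : IsLyndonFactorisation L)
    (hL : L.flatten = []) : L = [] := by
  cases L with
  | nil => rfl
  | cons a L => exact absurd (flatten_eq_nil_iff.1 hL a mem_cons_self) (h.1 a mem_cons_self).1

theorem exists_flatten_eq_append {u : List α} (hu : IsLyndon u) {L : List (List α)}
    (hL : IsLyndonFactorisation L) :
    ∃ M, IsLyndonFactorisation M ∧ M.flatten = u ++ L.flatten := by
  induction L generalizing u with
  | nil => exact ⟨[u], ⟨by simp [hu], isChain_singleton u⟩, by simp⟩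
  | cons v L ih =>
    by_cases huv : u < v
    · obtain ⟨M, hM, hMf⟩ := ih (hu.append (hL.1 v mem_cons_self) huv) hL.of_cons
      exact ⟨M, hM, by simp [hMf]⟩
    · refine ⟨u :: v :: L, ⟨?_, isChain_cons_cons.2 ⟨not_lt.1 huv, hL.2⟩⟩, by simp⟩
      rintro x (_ | ⟨_, hx⟩)
      exacts [hu, hL.1 x hx]

theorem length_le_of_prefix_flatten {a : List α} {L : List (List α)}
    (hL : IsLyndonFactorisation (a :: L)) {b : List α} (hb : IsLyndon b)
    (hpre : b <+: (a :: L).flatten) : b.length ≤ a.length := by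
  by_contra! hlen
  -- `IsPrefix.le` is about core's order on lists, `a ≤ b := ¬ b < a`
  have hab : a ≤ b := not_lt.1 (prefix_of_prefix_length_le (prefix_append a _) hpre hlen.le).le
  obtain ⟨L₁, x, L₂, u, hLx, hux, hu, rfl⟩ := exists_eq_append_cons_of_prefix_flatten hpre hb.1
  cases L₁ with
  | nil =>
    obtain ⟨rfl, -⟩ := cons.inj hLx
    simp only [flatten_nil, nil_append] at hlen
    exact absurd hux.length_le (by omega)
  | cons _ L₁ =>
    obtain ⟨rfl, rfl⟩ := cons.inj hLx
    have hua : u ≠ (a :: L₁).flatten ++ u := by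
      rw [Ne, self_eq_append_left, flatten_cons, append_eq_nil_iff]
      exact fun h => (hL.1 a mem_cons_self).1 h.1
    have hbu : (a :: L₁).flatten ++ u < u := hb.2 u hu hua (suffix_append _ u)
    have hxa : x ≤ a := hL.le_head_of_mem (by simp)
    exact absurd (hbu.trans_le ((not_lt.1 hux.le).trans (hxa.trans hab))) (lt_irrefl _)

theorem eq_of_flatten_eq {L M : List (List α)} (hL : IsLyndonFactorisation L)
    (hM : IsLyndonFactorisation M) (h : L.flatten = M.flatten) : L = M := by
  induction L generalizing M with
  | nil => exact (hM.eq_nil_of_flatten_eq_nil h.symm).symm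
  | cons a L ih =>
    cases M with
    | nil => exact hL.eq_nil_of_flatten_eq_nil h
    | cons b M =>
      have hlen : a.length = b.length := le_antisymm
        (hM.length_le_of_prefix_flatten (hL.1 a mem_cons_self) (h ▸ prefix_append a _))
        (hL.length_le_of_prefix_flatten (hM.1 b mem_cons_self) (h ▸ prefix_append b _))
      obtain ⟨rfl, hflat⟩ := append_inj (by simpa using h) hlen
      rw [ih hL.of_cons hM.of_cons hflat]

end IsLyndonFactorisation

theorem exists_isLyndonFactorisation (y : List α) :
    ∃ L, IsLyndonFactorisation L ∧ L.flatten = y := by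
  induction y with
  | nil => exact ⟨[], .nil, rfl⟩
  | cons c y ih =>
    obtain ⟨L, hL, rfl⟩ := ih
    exact hL.exists_flatten_eq_append (u := [c]) (isLyndon_singleton c)

end

theorem lyndon_factorisation_exists_unique_general {α : Type*} [LinearOrder α]
    (y : List α) :
    ∃! L : List (List α),
      L.flatten = y ∧ (∀ x ∈ L, IsLyndon x) ∧
      List.Chain' (fun a b => b = a ∨ List.Lex (· < ·) b a) L := by
  obtain ⟨L, hL, rfl⟩ := exists_isLyndonFactorisation y
  -- on lists, `b ≤ a` unfolds to `b = a ∨ b < a`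
  exact ⟨L, ⟨rfl, hL⟩, fun M ⟨hM, hML⟩ =>
    IsLyndonFactorisation.eq_of_flatten_eq hML hL hM⟩

/-- Chen–Fox–Lyndon: every non-empty word admits a unique factorisation into
a lexicographically non-increasing sequence of Lyndon words. -/
theorem lyndon_factorisation_exists_unique {α : Type*} [LinearOrder α] [Inhabited α]
    (y : List α) (hy : y ≠ []) :
    ∃! L : List (List α),
      L.flatten = y ∧ (∀ x ∈ L, IsLyndon x) ∧
      List.Chain' (fun a b => b = a ∨ List.Lex (· < ·) b a) L :=
  lyndon_factorisation_exists_unique_general y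
end

section
/- Let y be a Lyndon word with |y| > 1 and write its left standard factorisation y = uv, where u is the longest proper Lyndon prefix of y. Then v is also a Lyndon word. -/
variable {α : Type*} [LinearOrder α] [Inhabited α]

/-!
Let `l` be the longest Lyndon prefix of `v`. If `u < l`, then `u ++ l` is a Lyndon prefix of `y`
longer than `u`, so it is all of `y` and `v = l`. Otherwise repeatedly splitting off longest
Lyndon prefixes gives factors that never increase, so `v` has a nonempty suffix `s ≤ l ≤ u`;
as `u` is a proper prefix of `y`, `s < y`, contradicting that `y` is Lyndon.
-/

namespace List

variable {β : Type*} [LinearOrder β]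

theorem append_lt_append_of_lt_of_not_prefix_s16 {a b : List β} (c d : List β) (h : a < b)
    (hab : ¬a <+: b) : a ++ c < b ++ d := by
  change Lex (· < ·) a b at h
  induction h with
  | nil => exact absurd nil_prefix hab
  | rel h => exact .rel h
  | cons _ ih => exact .cons (ih fun hp => hab (prefix_cons_inj _ |>.mpr hp))

theorem lt_append_of_ne_nil (u : List β) {v : List β} (hv : v ≠ []) : u < u ++ v := by
  obtain ⟨a, v, rfl⟩ := exists_cons_of_ne_nil hv
  simpa using append_left_lt (l₁ := u) (nil_lt_cons a v)

end List

open List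

section Lyndon

variable {β : Type*} [LinearOrder β]

theorem IsLyndon.lt_of_suffix {w s : List β} (hw : IsLyndon w) (hs : s ≠ []) (hsw : s <:+ w)
    (hne : s ≠ w) : w < s :=
  hw.2 s hs hne hsw

theorem isLyndon_singleton_s16 (a : β) : IsLyndon [a] := by
  refine ⟨cons_ne_nil a [], fun s hs hne hsuf => absurd (hsuf.eq_of_length_le ?_) hne⟩
  simpa [Nat.one_le_iff_ne_zero] using hs

theorem IsLyndon.append_lt_right {u w : List β} (hu : IsLyndon u) (hw : IsLyndon w)
    (huw : u < w) : u ++ w < w := by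
  by_cases hpre : u <+: w
  · obtain ⟨t, rfl⟩ := hpre
    have ht : t ≠ [] := by rintro rfl; simp at huw
    have htw : u ++ t < t := hw.lt_of_suffix ht (suffix_append u t)
      (fun h => hu.1 (by simpa using congrArg length h))
    exact append_left_lt htw
  · simpa using append_lt_append_of_lt_of_not_prefix_s16 w [] huw hpre

theorem IsLyndon.append_s16 {u w : List β} (hu : IsLyndon u) (hw : IsLyndon w) (huw : u < w) :
    IsLyndon (u ++ w) := by
  refine ⟨by simp [hu.1], fun s hs hne ⟨t, hts⟩ => ?_⟩
  rcases append_eq_append_iff.mp hts with ⟨s', hu', rfl⟩ | ⟨t', -, rfl⟩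
  · rcases eq_or_ne s' [] with rfl | hs'
    · simpa using hu.append_lt_right hw huw
    have hs'u : s' <:+ u := ⟨t, hu'.symm⟩
    have hs'ne : s' ≠ u := by rintro rfl; exact hne rfl
    -- `s'` is shorter than `u`, so `u < s'` is decided at a letter, which survives appending `w`
    have hnpre : ¬u <+: s' := fun h =>
      hs'ne (hs'u.eq_of_length (le_antisymm hs'u.length_le h.length_le))
    exact append_lt_append_of_lt_of_not_prefix_s16 w w (hu.lt_of_suffix hs' hs'u hs'ne) hnpre
  · rcases eq_or_ne t' [] with rfl | ht'
    · simpa using hu.append_lt_right hw huw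
    exact (hu.append_lt_right hw huw).trans
      (hw.lt_of_suffix hs (suffix_append t' s) (fun h => ht' (by simpa using congrArg length h)))

def IsLongestLyndonPrefix (l v : List β) : Prop :=
  IsLyndon l ∧ l <+: v ∧ ∀ l', IsLyndon l' → l' <+: v → l'.length ≤ l.length

theorem exists_isLongestLyndonPrefix {v : List β} (hv : v ≠ []) :
    ∃ l, IsLongestLyndonPrefix l v := by
  classical
  obtain ⟨a, v, rfl⟩ := exists_cons_of_ne_nil hv
  have hne : {l ∈ (a :: v).inits.toFinset | IsLyndon l}.Nonempty :=
    ⟨[a], by simp [isLyndon_singleton_s16]⟩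
  obtain ⟨l, hl, hmax⟩ := Finset.exists_max_image _ length hne
  simp only [Finset.mem_filter, mem_toFinset, mem_inits] at hl hmax
  exact ⟨l, hl.2, hl.1, fun l' hl' hpre => hmax l' ⟨hpre, hl'⟩⟩

theorem IsLongestLyndonPrefix.exists_suffix_le {l v : List β} (h : IsLongestLyndonPrefix l v) :
    ∃ s, s ≠ [] ∧ s <:+ v ∧ s ≤ l := by
  obtain ⟨hl, ⟨t, rfl⟩, hmax⟩ := h
  rcases eq_or_ne t [] with rfl | ht
  · exact ⟨l, hl.1, by simp, le_rfl⟩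
  obtain ⟨l₁, hl₁⟩ := exists_isLongestLyndonPrefix ht
  have hl₁l : l₁ ≤ l := by
    by_contra! hll₁
    have := hmax _ (hl.append_s16 hl₁.1 hll₁) ((prefix_append_right_inj l).mpr hl₁.2.1)
    exact hl₁.1.1 (by simpa using this)
  obtain ⟨s, hs, hst, hsl₁⟩ := hl₁.exists_suffix_le
  exact ⟨s, hs, hst.trans (suffix_append l t), hsl₁.trans hl₁l⟩
termination_by v.length
decreasing_by
  subst_vars
  simpa [length_pos_iff] using hl.1

end Lyndon

theorem right_factor_of_left_standard_factorisation_general {α : Type*} [LinearOrder α]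
    (y u v : List α) (hy : IsLyndon y)
    (hfac : y = u ++ v) (hu : IsLyndon u) (huy : u ≠ y)
    (hmax : ∀ u' : List α, IsLyndon u' → u' <+: y → u' ≠ y → u'.length ≤ u.length) :
    IsLyndon v := by
  subst hfac
  have hv : v ≠ [] := by rintro rfl; simp at huy
  obtain ⟨l, hl⟩ := exists_isLongestLyndonPrefix hv
  rcases lt_or_ge u l with hul | hlu
  · have hfull : u ++ l = u ++ v := by
      by_contra hne
      have := hmax _ (hu.append_s16 hl.1 hul) ((prefix_append_right_inj u).mpr hl.2.1) hne
      exact hl.1.1 (by simpa using this)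
    exact append_cancel_left hfull ▸ hl.1
  · obtain ⟨s, hs, hsv, hsl⟩ := hl.exists_suffix_le
    have hys : u ++ v < s := hy.lt_of_suffix hs (hsv.trans (suffix_append u v))
      (fun h => hu.1 (by simpa [h] using hsv.length_le))
    exact absurd ((hsl.trans hlu).trans_lt (lt_append_of_ne_nil u hv)) hys.not_gt

/-- Left standard factorisation: if `y = u ++ v` is a Lyndon word with
`|y| > 1` and `u` is its longest proper Lyndon prefix, then `v` is a
Lyndon word as well. -/
theorem right_factor_of_left_standard_factorisation {α : Type*} [LinearOrder α] [Inhabited α]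
    (y u v : List α) (hy : IsLyndon y) (hlen : 1 < y.length)
    (hfac : y = u ++ v) (hu : IsLyndon u) (huy : u ≠ y)
    (hmax : ∀ u' : List α, IsLyndon u' → u' <+: y → u' ≠ y → u'.length ≤ u.length) :
    IsLyndon v :=
  right_factor_of_left_standard_factorisation_general y u v hy hfac hu huy hmax
end
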